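/- First fundamental theorem of multiple almost-Riordan arrays, case j = 0: for u(t) = Σ_{k≥0} u_{ℓk} t^{ℓk} ∈ K[[t^ℓ]], the action of the multiple almost-Riordan array (b | g; f₁, …, f_ℓ) on u gives v(t) = u₀·b + (tg/f_ℓ)·(u(h) − u₀), where h = (f₁⋯f_ℓ)^{1/ℓ} and u₀ = u(0). -/

import Mathlib

/-! The action sends `u` to `∑ₖ uₖ cₖ`, where `cₖ` is the `k`-th column. As `u ∈ K[[t^ℓ]]`, only
`c₀ = b` and the columns `c_{ℓm} = t g (f₁⋯f_ℓ)^{m-1} f₁⋯f_{ℓ-1} = (t g / f_ℓ) h^{ℓm}` (`m ≥ 1`)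
meet nonzero coefficients of `u`. So the columns may be replaced by `b, (tg/f_ℓ) h, (tg/f_ℓ) h², …`,
a Riordan-type array, whose action is `u ↦ (tg/f_ℓ) u(h)` up to the correction in column `0`. -/

open PowerSeries

/-- Composition `g ∘ f` of formal power series (meaningful when `f` has zero
constant term). -/
noncomputable def pcomp {K : Type*} [Field K] (g f : PowerSeries K) : PowerSeries K :=
  PowerSeries.mk fun n => ∑ k ∈ Finset.range (n + 1), coeff k g * coeff n (f ^ k)

/-- `f/t`: the coefficient shift of a power series. -/
noncomputable def pdivX {K : Type*} [Field K] (f : PowerSeries K) : PowerSeries K :=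
  PowerSeries.mk fun n => coeff (n + 1) f

/-- `g ∈ K[[t^ℓ]]`. -/
def InTl {K : Type*} [Field K] (ℓ : ℕ) (g : PowerSeries K) : Prop :=
  ∀ n : ℕ, ¬ ℓ ∣ n → coeff n g = 0

/-- A multiplier function: `f ∈ t·K[[t^ℓ]]` with `f'(0) ≠ 0`. -/
def IsMult {K : Type*} [Field K] (ℓ : ℕ) (f : PowerSeries K) : Prop :=
  constantCoeff f = 0 ∧ (∀ n : ℕ, n % ℓ ≠ 1 % ℓ → coeff n f = 0) ∧ coeff 1 f ≠ 0

/-- Column generating functions `(b, tg, tgf₁, tgf₁f₂, …)` of the multiple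
almost-Riordan array `(b | g; f₁, …, f_ℓ)`. -/
noncomputable def maCol {K : Type*} [Field K] (ℓ : ℕ) (b g : PowerSeries K)
    (f : ℕ → PowerSeries K) : ℕ → PowerSeries K
  | 0 => b
  | k + 1 => X * g * ∏ j ∈ Finset.range ℓ, f j ^ ((k + ℓ - 1 - j) / ℓ)

section ColumnAction

open Finset

variable {K : Type*} [Field K]

noncomputable def colAction (c : ℕ → K⟦X⟧) (u : K⟦X⟧) : K⟦X⟧ :=
  mk fun n => ∑ k ∈ range (n + 1), coeff n (c k) * coeff k u

theorem colAction_congr {c d : ℕ → K⟦X⟧} {u : K⟦X⟧}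
    (hcd : ∀ k, coeff k u ≠ 0 → c k = d k) : colAction c u = colAction d u := by
  ext n
  simp only [colAction, coeff_mk]
  refine sum_congr rfl fun k _ => ?_
  by_cases hk : coeff k u = 0
  · simp [hk]
  · rw [hcd k hk]

theorem colAction_update_zero (c : ℕ → K⟦X⟧) (b u : K⟦X⟧) :
    colAction (Function.update c 0 b) u = colAction c u + C (constantCoeff u) * (b - c 0) := by
  ext n
  simp only [colAction, coeff_mk, map_add, coeff_C_mul, sum_range_succ',
    Function.update_self, ne_eq, Nat.succ_ne_zero, not_false_eq_true,
    Function.update_of_ne, map_sub, coeff_zero_eq_constantCoeff]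
  ring

theorem coeff_pow_eq_zero_of_lt {h : K⟦X⟧} (h0 : constantCoeff h = 0) {j k : ℕ} (hjk : j < k) :
    coeff j (h ^ k) = 0 :=
  X_pow_dvd_iff.mp (pow_dvd_pow_of_dvd (X_dvd_iff.mpr h0) k) j hjk

theorem coeff_pcomp_of_le {h : K⟦X⟧} (h0 : constantCoeff h = 0) (u : K⟦X⟧) {n N : ℕ}
    (hnN : n ≤ N) :
    coeff n (pcomp u h) = ∑ k ∈ range (N + 1), coeff k u * coeff n (h ^ k) := by
  refine (coeff_mk _ _).trans (sum_subset (range_subset_range.mpr (by omega)) ?_)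
  intro k _ hk
  rw [coeff_pow_eq_zero_of_lt h0 (by simpa using hk), mul_zero]

theorem colAction_mul_pow {h : K⟦X⟧} (h0 : constantCoeff h = 0) (A u : K⟦X⟧) :
    colAction (fun k => A * h ^ k) u = A * pcomp u h := by
  ext n
  rw [colAction, coeff_mk, coeff_mul]
  simp only [coeff_mul, sum_mul]
  calc _ = ∑ p ∈ antidiagonal n,
        ∑ k ∈ range (n + 1), coeff p.1 A * (coeff k u * coeff p.2 (h ^ k)) := by
        rw [sum_comm]
        refine sum_congr rfl fun k _ => sum_congr rfl fun p _ => by ring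
    _ = _ := by
        refine sum_congr rfl fun p hp => ?_
        rw [coeff_pcomp_of_le h0 u (HasAntidiagonal.antidiagonal.snd_le hp), mul_sum]

theorem X_mul_pdivX {f : K⟦X⟧} (hf : constantCoeff f = 0) : X * pdivX f = f := by
  simpa [hf, pdivX] using (eq_X_mul_shift_add_const f).symm

theorem mul_add_div_self_of_lt {d r : ℕ} (hr : r < d) (q : ℕ) : (d * q + r) / d = q := by
  rw [Nat.mul_add_div (by omega), Nat.div_eq_of_lt hr, add_zero]

theorem maCol_mul_mul_eq_X_mul_prod_pow (L m : ℕ) (b g : K⟦X⟧) (f : ℕ → K⟦X⟧) :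
    maCol (L + 1) b g f ((L + 1) * (m + 1)) * f L
      = X * g * (∏ j ∈ range (L + 1), f j) ^ (m + 1) := by
  have hidx : (L + 1) * (m + 1) = ((L + 1) * m + L) + 1 := by ring
  have hexp : ∀ j ∈ range L, ((L + 1) * m + L + (L + 1) - 1 - j) / (L + 1) = m + 1 := by
    intro j hj
    have hj : j < L := mem_range.mp hj
    have : (L + 1) * m + L + (L + 1) - 1 - j = (L + 1) * (m + 1) + (L - 1 - j) := by
      rw [hidx]; omega
    rw [this, mul_add_div_self_of_lt (by omega)]
  have hlast : ((L + 1) * m + L + (L + 1) - 1 - L) / (L + 1) = m := by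
    rw [show (L + 1) * m + L + (L + 1) - 1 - L = (L + 1) * m + L by omega,
      mul_add_div_self_of_lt (by omega)]
  rw [hidx, maCol, prod_range_succ, prod_congr rfl fun j hj => congrArg (f j ^ ·) (hexp j hj),
    hlast, prod_pow, prod_range_succ, mul_pow]
  ring

theorem maCol_mul_eq_mul_pow {ℓ m : ℕ} (hℓ : ℓ ≠ 0) (hm : m ≠ 0) (b g h : K⟦X⟧)
    {f : ℕ → K⟦X⟧} (hf0 : constantCoeff (f (ℓ - 1)) = 0) (hf1 : coeff 1 (f (ℓ - 1)) ≠ 0)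
    (hroot : h ^ ℓ = ∏ j ∈ range ℓ, f j) :
    maCol ℓ b g f (ℓ * m) = g * (pdivX (f (ℓ - 1)))⁻¹ * h ^ (ℓ * m) := by
  obtain ⟨L, rfl⟩ := Nat.exists_eq_succ_of_ne_zero hℓ
  obtain ⟨m, rfl⟩ := Nat.exists_eq_succ_of_ne_zero hm
  simp only [Nat.succ_eq_add_one, Nat.add_sub_cancel] at hf0 hf1 ⊢
  have hP : constantCoeff (pdivX (f L)) ≠ 0 := by simpa [pdivX] using hf1
  rw [mul_right_comm, eq_mul_inv_iff_mul_eq hP, pow_mul, hroot]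
  apply mul_left_cancel₀ (X_ne_zero (R := K))
  rw [← mul_assoc, mul_comm X, mul_assoc, X_mul_pdivX hf0, maCol_mul_mul_eq_X_mul_prod_pow]
  ring

end ColumnAction

theorem FFT_multiple_almost_riordan_case0_general {K : Type*} [Field K]
    (ℓ : ℕ)
    (b g : PowerSeries K) (f : ℕ → PowerSeries K) (h : PowerSeries K)
    (hf : ∀ j < ℓ, IsMult ℓ (f j))
    (hh : IsMult ℓ h) (hroot : h ^ ℓ = ∏ j ∈ Finset.range ℓ, f j)
    (u : PowerSeries K) (hu : InTl ℓ u) :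
    (PowerSeries.mk fun n =>
        ∑ k ∈ Finset.range (n + 1), coeff n (maCol ℓ b g f k) * coeff k u) =
      C (constantCoeff u) * b +
        g * (pdivX (f (ℓ - 1)))⁻¹ * (pcomp u h - C (constantCoeff u)) := by
  set A := g * (pdivX (f (ℓ - 1)))⁻¹
  have hcol : ∀ k, coeff k u ≠ 0 → maCol ℓ b g f k = Function.update (A * h ^ ·) 0 b k := by
    intro k hk
    rcases eq_or_ne k 0 with rfl | hk0
    · simp [maCol]
    obtain ⟨m, rfl⟩ : ℓ ∣ k := not_not.mp (mt (hu k) hk)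
    have hℓ : ℓ ≠ 0 := left_ne_zero_of_mul hk0
    have hfℓ := hf (ℓ - 1) (by omega)
    rw [Function.update_of_ne hk0]
    exact maCol_mul_eq_mul_pow hℓ (right_ne_zero_of_mul hk0) b g h hfℓ.1 hfℓ.2.2 hroot
  change colAction (maCol ℓ b g f) u = _
  rw [colAction_congr hcol, colAction_update_zero, colAction_mul_pow hh.1]
  ring

/-- First fundamental theorem of multiple almost-Riordan arrays, case `j = 0`:
for `u ∈ K[[t^ℓ]]`, the action of `(b | g; f₁, …, f_ℓ)` on `u` is
`u₀·b + (tg/f_ℓ)·(u(h) − u₀)`, where `h = (f₁⋯f_ℓ)^{1/ℓ}` and `u₀ = u(0)`. -/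
theorem FFT_multiple_almost_riordan_case0 {K : Type*} [Field K] [CharZero K]
    (ℓ : ℕ) (hℓ : 1 ≤ ℓ)
    (b g : PowerSeries K) (f : ℕ → PowerSeries K) (h : PowerSeries K)
    (hb : InTl ℓ b) (hb0 : constantCoeff b ≠ 0)
    (hg : InTl ℓ g) (hg0 : constantCoeff g ≠ 0)
    (hf : ∀ j < ℓ, IsMult ℓ (f j))
    (hh : IsMult ℓ h) (hroot : h ^ ℓ = ∏ j ∈ Finset.range ℓ, f j)
    (u : PowerSeries K) (hu : InTl ℓ u) :
    (PowerSeries.mk fun n =>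
        ∑ k ∈ Finset.range (n + 1), coeff n (maCol ℓ b g f k) * coeff k u) =
      C (constantCoeff u) * b +
        g * (pdivX (f (ℓ - 1)))⁻¹ * (pcomp u h - C (constantCoeff u)) :=
  FFT_multiple_almost_riordan_case0_general ℓ b g f h hf hh hroot u hu
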